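/- arXiv:2307.15012 — 2 statements merged into one kernel-verified Lean document; each statement's English description precedes it below -/
import Mathlib

section
/- Let n = 3^s·t where s ≥ 1, t > 1 and 3 ∤ t. Let x ∈ [3n−1] and suppose 1 ≤ T(x) < s+1. Then there exists y in the H-orbit of x such that either T(y) = 0, or (y_0 = 0, y_1 = 2 and T(x) ≥ T(y)). -/
lemma shuffleAux.div_lt (k n : ℕ) (x : Fin (k * n)) : (x : ℕ) / n < k := by
  have hx := x.isLt
  have hn : 0 < n := by
    rcases Nat.eq_zero_or_pos n with rfl | h
    · simp at hx
    · exact h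
  exact (Nat.div_lt_iff_lt_mul hn).mpr hx

lemma shuffleAux.mod_lt (k n : ℕ) (x : Fin (k * n)) : (x : ℕ) % n < n := by
  have hx := x.isLt
  have hn : 0 < n := by
    rcases Nat.eq_zero_or_pos n with rfl | h
    · simp at hx
    · exact h
  exact Nat.mod_lt _ hn

lemma shuffleAux.bound1 (k n : ℕ) (x : Fin (k * n)) :
    k * ((x : ℕ) % n) + (x : ℕ) / n < k * n := by
  have h1 := shuffleAux.mod_lt k n x
  have h2 := shuffleAux.div_lt k n x
  calc k * ((x : ℕ) % n) + (x : ℕ) / n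
      < k * ((x : ℕ) % n) + k := by omega
    _ = k * ((x : ℕ) % n + 1) := by ring
    _ ≤ k * n := Nat.mul_le_mul_left _ (by omega)

lemma shuffleAux.bound2 (k n : ℕ) (x : Fin (k * n)) (j : Fin k) :
    (x : ℕ) % n + (j : ℕ) * n < k * n := by
  have h1 := shuffleAux.mod_lt k n x
  have h2 := j.isLt
  calc (x : ℕ) % n + (j : ℕ) * n
      < n + (j : ℕ) * n := by omega
    _ = ((j : ℕ) + 1) * n := by ring
    _ ≤ k * n := Nat.mul_le_mul_right _ (by omega)

/-- The standard shuffle `σ` on a deck of `k * n` cards, where the card in position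
`i + j·n` (`i ∈ [n]`, `j ∈ [k]`) is sent to position `k·i + j`; equivalently
`σ(x) = k·(x mod n) + ⌊x / n⌋`. -/
noncomputable def stdShuffle (k n : ℕ) : Equiv.Perm (Fin (k * n)) :=
  Equiv.ofBijective
    (fun x => ⟨k * ((x : ℕ) % n) + (x : ℕ) / n, shuffleAux.bound1 k n x⟩)
    (Finite.injective_iff_bijective.mp (by
      intro x y hxy
      simp only [Fin.mk.injEq] at hxy
      have hk : 0 < k := lt_of_le_of_lt (Nat.zero_le _) (shuffleAux.div_lt k n x)
      have key : ∀ z : Fin (k * n),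
          (k * ((z : ℕ) % n) + (z : ℕ) / n) % k = (z : ℕ) / n ∧
          (k * ((z : ℕ) % n) + (z : ℕ) / n) / k = (z : ℕ) % n := by
        intro z
        have hz := shuffleAux.div_lt k n z
        constructor
        · rw [Nat.mul_add_mod, Nat.mod_eq_of_lt hz]
        · rw [Nat.mul_add_div hk, Nat.div_eq_of_lt hz, Nat.add_zero]
      obtain ⟨h1x, h2x⟩ := key x
      obtain ⟨h1y, h2y⟩ := key y
      rw [hxy] at h1x h2x
      have hd : (x : ℕ) / n = (y : ℕ) / n := by omega
      have hm : (x : ℕ) % n = (y : ℕ) % n := by omega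
      apply Fin.ext
      rw [← Nat.div_add_mod (x : ℕ) n, ← Nat.div_add_mod (y : ℕ) n, hd, hm]))

/-- The permutation `ρ_τ` induced by a permutation `τ` of the `k` piles:
`ρ_τ(i + j·n) = i + τ(j)·n` for `i ∈ [n]`, `j ∈ [k]`. -/
noncomputable def pilePerm (k n : ℕ) (τ : Equiv.Perm (Fin k)) : Equiv.Perm (Fin (k * n)) :=
  Equiv.ofBijective
    (fun x => ⟨(x : ℕ) % n + ((τ ⟨(x : ℕ) / n, shuffleAux.div_lt k n x⟩ : Fin k) : ℕ) * n,
      shuffleAux.bound2 k n x _⟩)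
    (Finite.injective_iff_bijective.mp (by
      intro x y hxy
      simp only [Fin.mk.injEq] at hxy
      have hn : 0 < n := lt_of_le_of_lt (Nat.zero_le _) (shuffleAux.mod_lt k n x)
      have key : ∀ z : Fin (k * n),
          ((z : ℕ) % n + ((τ ⟨(z : ℕ) / n, shuffleAux.div_lt k n z⟩ : Fin k) : ℕ) * n) % n
            = (z : ℕ) % n ∧
          ((z : ℕ) % n + ((τ ⟨(z : ℕ) / n, shuffleAux.div_lt k n z⟩ : Fin k) : ℕ) * n) / n
            = ((τ ⟨(z : ℕ) / n, shuffleAux.div_lt k n z⟩ : Fin k) : ℕ) := by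
        intro z
        have h1 := shuffleAux.mod_lt k n z
        constructor
        · rw [Nat.add_mul_mod_self_right, Nat.mod_eq_of_lt h1]
        · rw [Nat.add_mul_div_right _ _ hn, Nat.div_eq_of_lt h1, Nat.zero_add]
      obtain ⟨h1x, h2x⟩ := key x
      obtain ⟨h1y, h2y⟩ := key y
      rw [hxy] at h1x h2x
      have hm : (x : ℕ) % n = (y : ℕ) % n := by omega
      have hv : ((τ ⟨(x : ℕ) / n, shuffleAux.div_lt k n x⟩ : Fin k) : ℕ)
          = ((τ ⟨(y : ℕ) / n, shuffleAux.div_lt k n y⟩ : Fin k) : ℕ) := by omega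
      have hτ : (⟨(x : ℕ) / n, shuffleAux.div_lt k n x⟩ : Fin k)
          = ⟨(y : ℕ) / n, shuffleAux.div_lt k n y⟩ := τ.injective (Fin.ext hv)
      have hd : (x : ℕ) / n = (y : ℕ) / n := congrArg Fin.val hτ
      apply Fin.ext
      rw [← Nat.div_add_mod (x : ℕ) n, ← Nat.div_add_mod (y : ℕ) n, hd, hm]))

/-- The shuffle group `G_{k,kn}`, generated by the standard shuffle `σ` together with
the pile permutations `ρ_τ` for all `τ ∈ Sym([k])`. -/
noncomputable def shuffleGroup (k n : ℕ) : Subgroup (Equiv.Perm (Fin (k * n))) :=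
  Subgroup.closure ({stdShuffle k n} ∪ Set.range (pilePerm k n))

/-- For `k = 3`, the subgroup `H = ⟨σ, ρ_{(01)}⟩` of `Sym([3n])`, where `(01)` is the
transposition of `Sym([3])` swapping `0` and `1`. -/
noncomputable def shuffleH (n : ℕ) : Subgroup (Equiv.Perm (Fin (3 * n))) :=
  Subgroup.closure {stdShuffle 3 n, pilePerm 3 n (Equiv.swap 0 1)}

/-- For `x ∈ [3n]` with `n = 3^s·t`, the `i`-th base-3 digit `x_i` of `⌊x/t⌋`. -/
def digit (t x i : ℕ) : ℕ := (x / t / 3 ^ i) % 3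

lemma digit_lt (t x i : ℕ) : digit t x i < 3 := Nat.mod_lt _ (by omega)

/-- `T(x) = |{i ∈ {0,...,s} : x_i = 2}|`, the number of base-3 digits of `⌊x/t⌋`
(among positions `0,...,s`) equal to `2`. -/
def twoCount (s t x : ℕ) : ℕ :=
  ((Finset.range (s + 1)).filter (fun i => digit t x i = 2)).card

/-!
Write `x = (∑ xᵢ 3ⁱ) t + X`. Every element of `H` fixes the last card `3n - 1`, and on the
other cards `σ` is `x ↦ 3x mod (3n - 1)`. Hence `σ⁻¹` moves the digits `x₁, …, x_s` down one
place and puts `x mod 3` into position `s`, while the conjugate `σ⁻ˢ ρ_{(01)} σˢ` adds `t` to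
a card with `x₀ = 0`: within the orbit, the bottom digit can be flipped between `0` and `1`.
Since `3 ∤ t`, a flip changes `x mod 3`, so as long as `x₀ ≠ 2` the digits can be rotated
down without creating a new `2`. Rotating a `2` into position `1` and flipping `x₀` to `0`
gives the second alternative. If instead `x₀ = 2`, the rotation either keeps `T` (the digits
rotate cyclically) or lowers it; the induction runs on `T` and on the position of a digit
different from `2`.
-/

open MulAction

lemma MulAction.mem_orbit_trans {G α : Type*} [Group G] [MulAction G α] {a b c : α}
    (hab : b ∈ orbit G a) (hbc : c ∈ orbit G b) : c ∈ orbit G a :=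
  orbit_eq_iff.mpr hab ▸ hbc

lemma stdShuffle_val (k n : ℕ) (x : Fin (k * n)) :
    (stdShuffle k n x : ℕ) = k * (x % n) + x / n := rfl

lemma pilePerm_val (k n : ℕ) (τ : Equiv.Perm (Fin k)) (x : Fin (k * n)) :
    (pilePerm k n τ x : ℕ) = x % n + (τ ⟨x / n, shuffleAux.div_lt k n x⟩ : ℕ) * n := rfl

lemma stdShuffle_inv_val (k n : ℕ) (y : Fin (k * n)) :
    ((stdShuffle k n)⁻¹ y : ℕ) = y % k * n + y / k := by
  have hk : 0 < k := Nat.pos_of_mul_pos_right (Fin.pos y)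
  have hq : (y : ℕ) / k < n := Nat.div_lt_of_lt_mul y.isLt
  have hlt : y % k * n + y / k < k * n :=
    calc y % k * n + y / k < (y % k + 1) * n := by rw [add_one_mul]; exact Nat.add_lt_add_left hq _
      _ ≤ k * n := Nat.mul_le_mul_right n (Nat.mod_lt _ hk)
  suffices h : stdShuffle k n ⟨_, hlt⟩ = y by rw [← Equiv.Perm.eq_inv_iff_eq.mpr h]
  ext
  rw [stdShuffle_val, Nat.mul_add_mod_self_right, Nat.mod_eq_of_lt hq,
    Nat.add_div_of_dvd_right (dvd_mul_left n _), Nat.mul_div_cancel _ (Nat.zero_lt_of_lt hq),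
    Nat.div_eq_of_lt hq, add_zero, Nat.div_add_mod]

lemma stdShuffle_apply_last (k n : ℕ) (z : Fin (k * n)) (hz : (z : ℕ) = k * n - 1) :
    stdShuffle k n z = z := by
  have hk : 0 < k := Nat.pos_of_mul_pos_right (Fin.pos z)
  have hn : 0 < n := Nat.pos_of_mul_pos_left (Fin.pos z)
  obtain ⟨k, rfl⟩ : ∃ k', k = k' + 1 := ⟨k - 1, by omega⟩
  have hsplit : (z : ℕ) = (n - 1) + k * n := by
    rw [hz, add_mul, one_mul]; omega
  ext
  rw [stdShuffle_val, hsplit, Nat.add_mul_mod_self_right, Nat.add_mul_div_right _ _ hn,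
    Nat.mod_eq_of_lt (by omega), Nat.div_eq_of_lt (by omega)]
  obtain ⟨n, rfl⟩ : ∃ n', n = n' + 1 := ⟨n - 1, by omega⟩
  simp only [Nat.add_sub_cancel]
  ring

lemma pilePerm_apply_of_fixed (k n : ℕ) (τ : Equiv.Perm (Fin k)) (x : Fin (k * n))
    (h : τ ⟨x / n, shuffleAux.div_lt k n x⟩ = ⟨x / n, shuffleAux.div_lt k n x⟩) :
    pilePerm k n τ x = x := by
  ext
  rw [pilePerm_val, h, Nat.mod_add_div']

lemma stdShuffle_val_eq_mul_mod (k n : ℕ) (y : Fin (k * n)) (hy : (y : ℕ) < k * n - 1) :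
    (stdShuffle k n y : ℕ) = k * y % (k * n - 1) := by
  set z : Fin (k * n) := ⟨k * n - 1, by omega⟩
  have hne : stdShuffle k n y ≠ z := by
    rw [← stdShuffle_apply_last k n z rfl, (stdShuffle k n).injective.ne_iff]
    exact fun h => ne_of_lt hy (congrArg Fin.val h)
  have hlt : (stdShuffle k n y : ℕ) < k * n - 1 := by
    have := (stdShuffle k n y).isLt
    have : (stdShuffle k n y : ℕ) ≠ k * n - 1 := fun h => hne (Fin.ext h)
    omega
  have hmul : k * y = stdShuffle k n y + (k * n - 1) * (y / n) := by
    have hdiv : k * (y : ℕ) = k * (y % n) + k * n * (y / n) := by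
      rw [mul_assoc, ← mul_add, Nat.mod_add_div]
    have hpred : (k * n - 1) * (y / n) + y / n = k * n * (y / n) := by
      rw [Nat.sub_one_mul, Nat.sub_add_cancel (Nat.le_mul_of_pos_left _ (by omega))]
    rw [stdShuffle_val]
    linarith
  rw [hmul, Nat.add_mul_mod_self_left, Nat.mod_eq_of_lt hlt]

lemma stdShuffle_pow_val (k n m : ℕ) (y : Fin (k * n)) (hy : (y : ℕ) < k * n - 1) :
    ((stdShuffle k n ^ m) y : ℕ) = k ^ m * y % (k * n - 1) := by
  induction m with
  | zero => rw [pow_zero, Equiv.Perm.one_apply, pow_zero, one_mul, Nat.mod_eq_of_lt hy]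
  | succ m ih =>
    rw [pow_succ', Equiv.Perm.mul_apply, stdShuffle_val_eq_mul_mod k n _
      (ih ▸ Nat.mod_lt _ (by omega)), ih, Nat.mul_mod_mod, pow_succ', mul_assoc]

lemma pilePerm_swap_val_of_lt (n : ℕ) (x : Fin (3 * n)) (hx : (x : ℕ) < n) :
    (pilePerm 3 n (Equiv.swap 0 1) x : ℕ) = x + n := by
  have hpile : (⟨x / n, shuffleAux.div_lt 3 n x⟩ : Fin 3) = 0 := Fin.ext (Nat.div_eq_of_lt hx)
  rw [pilePerm_val, hpile, Equiv.swap_apply_left, Nat.mod_eq_of_lt hx, Fin.val_one, one_mul]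

lemma stdShuffle_mem_shuffleH (n : ℕ) : stdShuffle 3 n ∈ shuffleH n :=
  Subgroup.subset_closure (Set.mem_insert _ _)

lemma pilePerm_mem_shuffleH (n : ℕ) : pilePerm 3 n (Equiv.swap 0 1) ∈ shuffleH n :=
  Subgroup.subset_closure (Set.mem_insert_of_mem _ rfl)

lemma stdShuffle_inv_apply_mem_orbit (n : ℕ) (y : Fin (3 * n)) :
    (stdShuffle 3 n)⁻¹ y ∈ orbit (shuffleH n) y :=
  mem_orbit_iff.2 ⟨⟨_, inv_mem (stdShuffle_mem_shuffleH n)⟩, rfl⟩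

lemma shuffleH_le_stabilizer (n : ℕ) (z : Fin (3 * n)) (hz : (z : ℕ) = 3 * n - 1) :
    shuffleH n ≤ stabilizer (Equiv.Perm (Fin (3 * n))) z := by
  have hn : 0 < n := Nat.pos_of_mul_pos_left (Fin.pos z)
  have hpile : (z : ℕ) / n = 2 := by
    rw [hz]; exact Nat.div_eq_of_lt_le (by omega) (by omega)
  rw [shuffleH, Subgroup.closure_le, Set.insert_subset_iff, Set.singleton_subset_iff]
  refine ⟨stdShuffle_apply_last 3 n z hz, pilePerm_apply_of_fixed 3 n _ z ?_⟩
  simp only [hpile]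
  rfl

lemma val_lt_of_mem_orbit {n : ℕ} {x y : Fin (3 * n)} (hy : y ∈ orbit (shuffleH n) x)
    (hx : (x : ℕ) < 3 * n - 1) : (y : ℕ) < 3 * n - 1 := by
  obtain ⟨⟨g, hg⟩, rfl⟩ := hy
  set z : Fin (3 * n) := ⟨3 * n - 1, by omega⟩
  have hgz : g z = z := shuffleH_le_stabilizer n z rfl hg
  by_contra hge
  have hgx : g x = z := Fin.ext (by
    change ¬ (g x : ℕ) < _ at hge
    show (g x : ℕ) = 3 * n - 1
    have := (g x).isLt
    omega)
  rw [← hgz] at hgx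
  exact (ne_of_lt hx) (congrArg Fin.val (g.injective hgx))

lemma digit_zero (t y : ℕ) : digit t y 0 = y / t % 3 := by
  rw [digit, pow_zero, Nat.div_one]

lemma digit_succ (t y i : ℕ) : digit t y (i + 1) = y / t / 3 / 3 ^ i % 3 := by
  rw [digit, Nat.div_div_eq_div_mul _ 3, ← pow_succ']

lemma add_mul_pow_div_pow_mod_three (u c : ℕ) {i s : ℕ} (hi : i < s) :
    (u + c * 3 ^ s) / 3 ^ i % 3 = u / 3 ^ i % 3 := by
  have hpow : c * 3 ^ s = 3 * (c * 3 ^ (s - i - 1)) * 3 ^ i := by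
    rw [show s = (s - i - 1) + 1 + i by omega, pow_add, pow_succ]
    simp only [Nat.add_sub_cancel]
    ring
  rw [hpow, Nat.add_mul_div_right _ _ (by positivity), Nat.add_mul_mod_self_left]

lemma digit_add_zero {t : ℕ} (ht : 0 < t) (y : ℕ) :
    digit t (y + t) 0 = (digit t y 0 + 1) % 3 := by
  rw [digit_zero, digit_zero, Nat.add_div_right _ ht]
  omega

lemma digit_add_succ {t y : ℕ} (ht : 0 < t) (h0 : digit t y 0 ≠ 2) (i : ℕ) :
    digit t (y + t) (i + 1) = digit t y (i + 1) := by
  rw [digit_zero] at h0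
  rw [digit_succ, digit_succ, Nat.add_div_right _ ht, show (y / t + 1) / 3 = y / t / 3 by omega]

lemma eq_three_mul_add_of_digit_zero_eq_zero {t y : ℕ} (h0 : digit t y 0 = 0) :
    y = 3 * t * (y / t / 3) + y % t := by
  rw [digit_zero] at h0
  have hq : y / t = 3 * (y / t / 3) := by omega
  calc y = t * (y / t) + y % t := (Nat.div_add_mod _ _).symm
    _ = t * (3 * (y / t / 3)) + y % t := by rw [← hq]
    _ = 3 * t * (y / t / 3) + y % t := by ring

lemma pos_of_not_three_dvd {t : ℕ} (h : ¬ 3 ∣ t) : 0 < t :=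
  Nat.pos_of_ne_zero (by rintro rfl; exact h (dvd_zero 3))

lemma twoCount_eq_sum (s t y : ℕ) :
    twoCount s t y = ∑ i ∈ Finset.range (s + 1), if digit t y i = 2 then 1 else 0 :=
  Finset.card_filter _ _

lemma twoCount_eq_of_digit_succ_eq {s t y z : ℕ} (hy : digit t y 0 ≠ 2) (hz : digit t z 0 ≠ 2)
    (h : ∀ i, digit t z (i + 1) = digit t y (i + 1)) : twoCount s t z = twoCount s t y := by
  simp only [twoCount_eq_sum, Finset.sum_range_succ', h, if_neg hy, if_neg hz]

lemma exists_digit_ne_two {s t y : ℕ} (h : twoCount s t y ≤ s) :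
    ∃ l ≤ s, digit t y l ≠ 2 := by
  by_contra! hall
  have hcount : twoCount s t y = s + 1 := by
    rw [twoCount, Finset.filter_true_of_mem fun i hi => hall i (Nat.lt_succ_iff.1
      (Finset.mem_range.1 hi)), Finset.card_range]
  omega

lemma exists_digit_eq_two {s t y : ℕ} (h : 1 ≤ twoCount s t y) (h0 : digit t y 0 ≠ 2) :
    ∃ a, 1 ≤ a ∧ a ≤ s ∧ digit t y a = 2 := by
  obtain ⟨a, ha⟩ := Finset.card_pos.1 h
  rw [Finset.mem_filter, Finset.mem_range] at ha
  exact ⟨a, Nat.pos_of_ne_zero (by rintro rfl; exact h0 ha.2), by omega, ha.2⟩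

def IsReducedCard (s t b z : ℕ) : Prop :=
  twoCount s t z = 0 ∨ (digit t z 0 = 0 ∧ digit t z 1 = 2 ∧ twoCount s t z ≤ b)

lemma IsReducedCard.mono {s t b b' z : ℕ} (h : IsReducedCard s t b z) (hb : b ≤ b') :
    IsReducedCard s t b' z :=
  h.imp_right fun ⟨h0, h1, hz⟩ => ⟨h0, h1, hz.trans hb⟩

section Shuffle

variable {s t n : ℕ}

lemma div_div_three_lt (hn : n = 3 ^ s * t) (y : Fin (3 * n)) : (y : ℕ) / t / 3 < 3 ^ s := by
  rw [Nat.div_div_eq_div_mul]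
  apply Nat.div_lt_of_lt_mul
  calc (y : ℕ) < 3 * n := y.isLt
    _ = t * 3 * 3 ^ s := by rw [hn]; ring

lemma stdShuffle_inv_div (hn : n = 3 ^ s * t) (ht : 0 < t) (y : Fin (3 * n)) :
    ((stdShuffle 3 n)⁻¹ y : ℕ) / t = y / t / 3 + y % 3 * 3 ^ s := by
  subst hn
  rw [stdShuffle_inv_val, ← mul_assoc, add_comm, Nat.add_mul_div_right _ _ ht,
    Nat.div_div_eq_div_mul, Nat.mul_comm 3 t, ← Nat.div_div_eq_div_mul]

lemma digit_stdShuffle_inv_of_lt (hn : n = 3 ^ s * t) (ht : 0 < t) (y : Fin (3 * n)) {i : ℕ}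
    (hi : i < s) : digit t ((stdShuffle 3 n)⁻¹ y) i = digit t y (i + 1) := by
  rw [digit, stdShuffle_inv_div hn ht, add_mul_pow_div_pow_mod_three _ _ hi, digit_succ]

lemma digit_stdShuffle_inv_self (hn : n = 3 ^ s * t) (ht : 0 < t) (y : Fin (3 * n)) :
    digit t ((stdShuffle 3 n)⁻¹ y) s = y % 3 := by
  rw [digit, stdShuffle_inv_div hn ht, Nat.add_mul_div_right _ _ (by positivity),
    Nat.div_eq_of_lt (div_div_three_lt hn y), zero_add, Nat.mod_mod]

lemma twoCount_stdShuffle_inv (hn : n = 3 ^ s * t) (ht : 0 < t) (y : Fin (3 * n)) :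
    twoCount s t ((stdShuffle 3 n)⁻¹ y) + (if digit t y 0 = 2 then 1 else 0) =
      twoCount s t y + if (y : ℕ) % 3 = 2 then 1 else 0 := by
  rw [twoCount_eq_sum, twoCount_eq_sum, Finset.sum_range_succ, Finset.sum_range_succ',
    digit_stdShuffle_inv_self hn ht, Finset.sum_congr rfl fun i hi => by
      rw [digit_stdShuffle_inv_of_lt hn ht y (Finset.mem_range.1 hi)]]
  ring

lemma val_add_lt_of_digit_zero_eq_zero (hn : n = 3 ^ s * t) (ht : 0 < t) (y : Fin (3 * n))
    (h0 : digit t y 0 = 0) : (y : ℕ) + t < 3 * n - 1 := by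
  have hyw := eq_three_mul_add_of_digit_zero_eq_zero h0
  have hw : t * (y / t / 3 + 1) ≤ t * 3 ^ s := Nat.mul_le_mul_left _ (div_div_three_lt hn y)
  have : (y : ℕ) % t < t := Nat.mod_lt _ ht
  have : 3 * t * (y / t / 3) + 3 * t ≤ 3 * n := by linarith
  omega

lemma stdShuffle_pow_val_lt_of_digit_zero_eq_zero (hn : n = 3 ^ s * t) (ht : 0 < t)
    {y : Fin (3 * n)} (hy : (y : ℕ) < 3 * n - 1) (h0 : digit t y 0 = 0) :
    ((stdShuffle 3 n ^ s) y : ℕ) < n := by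
  have hyw := eq_three_mul_add_of_digit_zero_eq_zero h0
  have hw : y / t / 3 + 1 ≤ 3 ^ s := div_div_three_lt hn y
  set w := (y : ℕ) / t / 3
  have hr : w + 3 ^ s * (y % t) < n := by
    have : 3 ^ s * (y % t + 1) ≤ 3 ^ s * t := Nat.mul_le_mul_left _ (Nat.mod_lt _ ht)
    linarith
  -- because `3 ^ (s + 1) * t = 3 * n`
  have hmul : 3 ^ s * (y : ℕ) = w + 3 ^ s * (y % t) + (3 * n - 1) * w := by
    have hpred : (3 * n - 1) * w + w = 3 * n * w := by
      rw [Nat.sub_one_mul, Nat.sub_add_cancel (Nat.le_mul_of_pos_left _ (by omega))]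
    have hnw : n * w = 3 ^ s * t * w := by rw [hn]
    calc 3 ^ s * (y : ℕ) = 3 ^ s * (3 * t * w + y % t) := congrArg _ hyw
      _ = _ := by linarith
  rw [stdShuffle_pow_val 3 n s y hy, hmul, Nat.add_mul_mod_self_left,
    Nat.mod_eq_of_lt (by omega)]
  exact hr

lemma stdShuffle_pow_val_add (hn : n = 3 ^ s * t) {y z : Fin (3 * n)}
    (hy : (y : ℕ) < 3 * n - 1) (hz : (z : ℕ) < 3 * n - 1) (hzy : (z : ℕ) = y + t)
    (hyn : ((stdShuffle 3 n ^ s) y : ℕ) < n) :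
    ((stdShuffle 3 n ^ s) z : ℕ) = (stdShuffle 3 n ^ s) y + n := by
  rw [stdShuffle_pow_val 3 n s z hz, hzy, mul_add, ← hn, Nat.add_mod,
    ← stdShuffle_pow_val 3 n s y hy, Nat.mod_eq_of_lt (show n < 3 * n - 1 by omega),
    Nat.mod_eq_of_lt (by omega)]

lemma exists_mem_orbit_val_eq_add (hn : n = 3 ^ s * t) (ht : 0 < t) {y : Fin (3 * n)}
    (hy : (y : ℕ) < 3 * n - 1) (h0 : digit t y 0 = 0) :
    ∃ z ∈ orbit (shuffleH n) y, (z : ℕ) = y + t := by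
  have hzlt := val_add_lt_of_digit_zero_eq_zero hn ht y h0
  set σ := stdShuffle 3 n
  set ρ := pilePerm 3 n (Equiv.swap 0 1)
  set z : Fin (3 * n) := ⟨y + t, by omega⟩
  have hyn : ((σ ^ s) y : ℕ) < n := stdShuffle_pow_val_lt_of_digit_zero_eq_zero hn ht hy h0
  have hρ : ρ ((σ ^ s) y) = (σ ^ s) z := Fin.ext <| by
    rw [pilePerm_swap_val_of_lt n _ hyn, stdShuffle_pow_val_add hn (z := z) hy hzlt rfl hyn]
  have hσH : σ ^ s ∈ shuffleH n := pow_mem (stdShuffle_mem_shuffleH n) s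
  refine ⟨z, mem_orbit_iff.2 ⟨⟨(σ ^ s)⁻¹ * ρ * σ ^ s,
    mul_mem (mul_mem (inv_mem hσH) (pilePerm_mem_shuffleH n)) hσH⟩, ?_⟩, rfl⟩
  change ((σ ^ s)⁻¹ * ρ * σ ^ s) y = z
  rw [Equiv.Perm.mul_apply, Equiv.Perm.mul_apply, hρ]
  exact Equiv.Perm.inv_eq_iff_eq.2 rfl

lemma exists_mem_orbit_flip (hn : n = 3 ^ s * t) (ht : 0 < t) {y : Fin (3 * n)}
    (hy : (y : ℕ) < 3 * n - 1) (h0 : digit t y 0 ≠ 2) :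
    ∃ z ∈ orbit (shuffleH n) y, digit t z 0 + digit t y 0 = 1 ∧
      (∀ i, digit t z (i + 1) = digit t y (i + 1)) ∧
      ((z : ℕ) = y + t ∨ (z : ℕ) + t = y) := by
  rcases (show digit t y 0 = 0 ∨ digit t y 0 = 1 by have := digit_lt t y 0; omega) with h | h
  · obtain ⟨z, hz, hzy⟩ := exists_mem_orbit_val_eq_add hn ht hy h
    refine ⟨z, hz, ?_, fun i => ?_, Or.inl hzy⟩
    · rw [hzy, digit_add_zero ht, h]
    · rw [hzy, digit_add_succ ht h0]
  · have hty : t ≤ (y : ℕ) := (Nat.one_le_div_iff ht).1 <|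
      Nat.pos_of_ne_zero fun hq => by rw [digit_zero, hq] at h; exact absurd h (by decide)
    set z : Fin (3 * n) := ⟨y - t, by omega⟩
    have hzy : (z : ℕ) + t = y := Nat.sub_add_cancel hty
    have hz0 : digit t z 0 = 0 := by
      have := digit_add_zero ht z
      rw [hzy, h] at this
      have := digit_lt t z 0
      omega
    obtain ⟨w, hw, hwz⟩ :=
      exists_mem_orbit_val_eq_add hn ht (by omega : (z : ℕ) < 3 * n - 1) hz0
    obtain rfl : w = y := Fin.ext (hwz.trans hzy)
    refine ⟨z, mem_orbit_symm.1 hw, by omega, fun i => ?_, Or.inr hzy⟩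
    rw [← hzy, digit_add_succ ht (by omega)]

lemma exists_mem_orbit_digit_zero_eq_zero (hn : n = 3 ^ s * t) (ht : 0 < t) {y : Fin (3 * n)}
    (hy : (y : ℕ) < 3 * n - 1) (h0 : digit t y 0 ≠ 2) :
    ∃ z ∈ orbit (shuffleH n) y, digit t z 0 = 0 ∧
      ∀ i, digit t z (i + 1) = digit t y (i + 1) := by
  by_cases hy0 : digit t y 0 = 0
  · exact ⟨y, mem_orbit_self y, hy0, fun _ => rfl⟩
  · obtain ⟨z, hz, hz0, hzi, -⟩ := exists_mem_orbit_flip hn ht hy h0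
    exact ⟨z, hz, by omega, hzi⟩

lemma exists_mem_orbit_mod_three_ne_two (hn : n = 3 ^ s * t) (h3t : ¬ 3 ∣ t) {y : Fin (3 * n)}
    (hy : (y : ℕ) < 3 * n - 1) (h0 : digit t y 0 ≠ 2) :
    ∃ z ∈ orbit (shuffleH n) y, (z : ℕ) % 3 ≠ 2 ∧ digit t z 0 ≠ 2 ∧
      ∀ i, digit t z (i + 1) = digit t y (i + 1) := by
  by_cases hy3 : (y : ℕ) % 3 = 2
  · have ht3 : t % 3 ≠ 0 := fun h => h3t (Nat.dvd_of_mod_eq_zero h)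
    obtain ⟨z, hz, hz0, hzi, hzy⟩ := exists_mem_orbit_flip hn (pos_of_not_three_dvd h3t) hy h0
    exact ⟨z, hz, by omega, by omega, hzi⟩
  · exact ⟨y, mem_orbit_self y, hy3, h0, fun _ => rfl⟩

lemma exists_mem_orbit_rotate (hn : n = 3 ^ s * t) (h3t : ¬ 3 ∣ t) {y : Fin (3 * n)}
    (hy : (y : ℕ) < 3 * n - 1) (h0 : digit t y 0 ≠ 2) :
    ∃ z ∈ orbit (shuffleH n) y, (∀ i < s, digit t z i = digit t y (i + 1)) ∧
      twoCount s t z = twoCount s t y := by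
  have ht := pos_of_not_three_dvd h3t
  obtain ⟨y', hy', hy'3, hy'0, hy'i⟩ := exists_mem_orbit_mod_three_ne_two hn h3t hy h0
  have hcount := twoCount_stdShuffle_inv hn ht y'
  rw [if_neg hy'0, if_neg hy'3, twoCount_eq_of_digit_succ_eq h0 hy'0 hy'i] at hcount
  refine ⟨_, mem_orbit_trans hy' (stdShuffle_inv_apply_mem_orbit n y'), fun i hi => ?_, hcount⟩
  rw [digit_stdShuffle_inv_of_lt hn ht y' hi, hy'i]

lemma exists_mem_orbit_digit_one_eq_two (hn : n = 3 ^ s * t) (h3t : ¬ 3 ∣ t) (a : ℕ)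
    (y : Fin (3 * n)) (hy : (y : ℕ) < 3 * n - 1) (h0 : digit t y 0 ≠ 2) (ha : 1 ≤ a)
    (has : a ≤ s) (hya : digit t y a = 2) :
    ∃ z ∈ orbit (shuffleH n) y, digit t z 0 = 0 ∧ digit t z 1 = 2 ∧
      twoCount s t z = twoCount s t y := by
  have ht := pos_of_not_three_dvd h3t
  induction a generalizing y with
  | zero => omega
  | succ a ih =>
    by_cases h1 : digit t y 1 = 2
    · obtain ⟨z, hz, hz0, hzi⟩ := exists_mem_orbit_digit_zero_eq_zero hn ht hy h0
      exact ⟨z, hz, hz0, (hzi 0).trans h1, twoCount_eq_of_digit_succ_eq h0 (by omega) hzi⟩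
    · have ha : 1 ≤ a := Nat.pos_of_ne_zero (by rintro rfl; exact h1 hya)
      obtain ⟨y', hy', hy'i, hcount⟩ := exists_mem_orbit_rotate hn h3t hy h0
      obtain ⟨z, hz, hz0, hz1, hzc⟩ := ih y' (val_lt_of_mem_orbit hy' hy)
        (by rw [hy'i 0 (by omega)]; exact h1) ha (by omega) (by rw [hy'i a (by omega)]; exact hya)
      exact ⟨z, mem_orbit_trans hy' hz, hz0, hz1, hzc.trans hcount⟩

lemma exists_mem_orbit_isReducedCard_of_digit_zero_ne_two (hn : n = 3 ^ s * t) (h3t : ¬ 3 ∣ t)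
    {y : Fin (3 * n)} (hy : (y : ℕ) < 3 * n - 1) (h1 : 1 ≤ twoCount s t y)
    (h0 : digit t y 0 ≠ 2) :
    ∃ z ∈ orbit (shuffleH n) y, IsReducedCard s t (twoCount s t y) z := by
  obtain ⟨a, ha1, has, hya⟩ := exists_digit_eq_two h1 h0
  obtain ⟨z, hz, hz0, hz1, hzc⟩ :=
    exists_mem_orbit_digit_one_eq_two hn h3t a y hy h0 ha1 has hya
  exact ⟨z, hz, Or.inr ⟨hz0, hz1, hzc.le⟩⟩

lemma exists_mem_orbit_isReducedCard_of_digit_ne_two (hn : n = 3 ^ s * t) (h3t : ¬ 3 ∣ t)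
    {m : ℕ} (ih : ∀ y : Fin (3 * n), (y : ℕ) < 3 * n - 1 → 1 ≤ twoCount s t y →
      twoCount s t y < m → ∃ z ∈ orbit (shuffleH n) y, IsReducedCard s t (twoCount s t y) z)
    (l : ℕ) (y : Fin (3 * n)) (hy : (y : ℕ) < 3 * n - 1) (hm : twoCount s t y = m)
    (h1 : 1 ≤ m) (hls : l ≤ s) (hyl : digit t y l ≠ 2) :
    ∃ z ∈ orbit (shuffleH n) y, IsReducedCard s t m z := by
  have ht := pos_of_not_three_dvd h3t
  induction l generalizing y with
  | zero =>
    exact hm ▸ exists_mem_orbit_isReducedCard_of_digit_zero_ne_two hn h3t hy (hm ▸ h1) hyl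
  | succ l ihl =>
    by_cases h0 : digit t y 0 = 2
    · have hcount := twoCount_stdShuffle_inv hn ht y
      rw [if_pos h0, hm] at hcount
      set y' := (stdShuffle 3 n)⁻¹ y
      have hy' : y' ∈ orbit (shuffleH n) y := stdShuffle_inv_apply_mem_orbit n y
      by_cases h3 : (y : ℕ) % 3 = 2
      · rw [if_pos h3] at hcount
        obtain ⟨z, hz, hzr⟩ := ihl y' (val_lt_of_mem_orbit hy' hy) (by omega) (by omega)
          (by rw [digit_stdShuffle_inv_of_lt hn ht y (by omega)]; exact hyl)
        exact ⟨z, mem_orbit_trans hy' hz, hzr⟩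
      · rw [if_neg h3] at hcount
        rcases Nat.eq_zero_or_pos (twoCount s t y') with h | h
        · exact ⟨y', hy', Or.inl h⟩
        · obtain ⟨z, hz, hzr⟩ := ih y' (val_lt_of_mem_orbit hy' hy) h (by omega)
          exact ⟨z, mem_orbit_trans hy' hz, hzr.mono (by omega)⟩
    · exact hm ▸ exists_mem_orbit_isReducedCard_of_digit_zero_ne_two hn h3t hy (hm ▸ h1) h0

theorem exists_mem_orbit_isReducedCard (hn : n = 3 ^ s * t) (h3t : ¬ 3 ∣ t) (y : Fin (3 * n))
    (hy : (y : ℕ) < 3 * n - 1) (h1 : 1 ≤ twoCount s t y) (hs : twoCount s t y ≤ s) :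
    ∃ z ∈ orbit (shuffleH n) y, IsReducedCard s t (twoCount s t y) z := by
  induction hm : twoCount s t y using Nat.strong_induction_on generalizing y with
  | _ m ih =>
    obtain ⟨l, hls, hyl⟩ := exists_digit_ne_two hs
    exact exists_mem_orbit_isReducedCard_of_digit_ne_two hn h3t
      (fun y' hy' h1' hlt => ih _ hlt y' hy' h1' (by omega) rfl) l y hy hm (hm ▸ h1) hls hyl

end Shuffle

theorem lemma_xy_general (s t n : ℕ) (h3t : ¬ 3 ∣ t) (hn : n = 3 ^ s * t)
    (x : Fin (3 * n)) (hx : (x : ℕ) < 3 * n - 1)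
    (hT1 : 1 ≤ twoCount s t (x : ℕ)) (hT2 : twoCount s t (x : ℕ) < s + 1) :
    ∃ g ∈ shuffleH n,
      twoCount s t ((g x : ℕ)) = 0 ∨
        (digit t ((g x : ℕ)) 0 = 0 ∧ digit t ((g x : ℕ)) 1 = 2 ∧
          twoCount s t ((g x : ℕ)) ≤ twoCount s t (x : ℕ)) := by
  obtain ⟨_, ⟨⟨g, hg⟩, rfl⟩, hred⟩ :=
    exists_mem_orbit_isReducedCard hn h3t x hx hT1 (Nat.lt_succ_iff.1 hT2)
  exact ⟨g, hg, hred⟩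

theorem lemma_xy (s t n : ℕ) (hs : 1 ≤ s) (ht : 1 < t) (h3t : ¬ 3 ∣ t) (hn : n = 3 ^ s * t)
    (x : Fin (3 * n)) (hx : (x : ℕ) < 3 * n - 1)
    (hT1 : 1 ≤ twoCount s t (x : ℕ)) (hT2 : twoCount s t (x : ℕ) < s + 1) :
    ∃ g ∈ shuffleH n,
      twoCount s t ((g x : ℕ)) = 0 ∨
        (digit t ((g x : ℕ)) 0 = 0 ∧ digit t ((g x : ℕ)) 1 = 2 ∧
          twoCount s t ((g x : ℕ)) ≤ twoCount s t (x : ℕ)) :=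
  lemma_xy_general s t n h3t hn x hx hT1 hT2
end

section
/- Let n = 3^s·t where s ≥ 1, t > 1 and 3 ∤ t. Suppose x ∈ [3n] satisfies x < 3n − 1 and x_i = 2 for every i ∈ {0, ..., s} (i.e., T(x) = s + 1). Then σ^{s+1}(x) = 3^{s+1}·(X + 1) − 1, and moreover σ^{s+1}(x) < x. -/
lemma stdShuffle_apply_val (k n : ℕ) (y : Fin (k * n)) :
    ((stdShuffle k n) y : ℕ) = k * ((y : ℕ) % n) + (y : ℕ) / n := rfl

lemma alltwo (s : ℕ) : ∀ q : ℕ, (∀ i ≤ s, q / 3 ^ i % 3 = 2) → q % 3 ^ (s + 1) = 3 ^ (s + 1) - 1 := by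
  induction s with
  | zero =>
    intro q h
    have h0 := h 0 le_rfl
    simpa using h0
  | succ s ih =>
    intro q h
    have h0 := h 0 (Nat.zero_le _)
    simp at h0
    have hrec := ih (q / 3) (fun i hi => by
      rw [Nat.div_div_eq_div_mul, ← pow_succ']
      exact h (i + 1) (by omega))
    have e1 : q % (3 * 3 ^ (s + 1)) % 3 = q % 3 := Nat.mod_mod_of_dvd _ ⟨3 ^ (s + 1), rfl⟩
    have e2 : q % (3 * 3 ^ (s + 1)) / 3 = q / 3 % 3 ^ (s + 1) := Nat.mod_mul_right_div_self q 3 _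
    have e3 := Nat.div_add_mod (q % (3 * 3 ^ (s + 1))) 3
    rw [e1, e2, hrec, h0] at e3
    have hM : 1 ≤ 3 ^ (s + 1) := Nat.one_le_pow _ _ (by norm_num)
    have hpow : (3 : ℕ) ^ (s + 1 + 1) = 3 * 3 ^ (s + 1) := by rw [pow_succ']
    rw [hpow, ← e3]
    generalize (3 : ℕ) ^ (s + 1) = M at hM ⊢
    omega

theorem all_digits_two (s t n : ℕ) (hs : 1 ≤ s) (ht : 1 < t) (h3t : ¬ 3 ∣ t) (hn : n = 3 ^ s * t)
    (x : Fin (3 * n)) (hx : (x : ℕ) < 3 * n - 1)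
    (hdig : ∀ i ≤ s, digit t (x : ℕ) i = 2) :
    (((stdShuffle 3 n ^ (s + 1)) x : ℕ) = 3 ^ (s + 1) * ((x : ℕ) % t + 1) - 1) ∧
      ((stdShuffle 3 n ^ (s + 1)) x : ℕ) < (x : ℕ) := by
  have ht0 : 0 < t := by omega
  have h9 : (9 : ℕ) ≤ 3 ^ (s + 1) := by
    calc (9 : ℕ) = 3 ^ 2 := by norm_num
      _ ≤ 3 ^ (s + 1) := Nat.pow_le_pow_right (by norm_num) (by omega)
  have hn3 : 3 * n = 3 ^ (s + 1) * t := by rw [hn, pow_succ']; ring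
  have hn0 : 0 < n := by rw [hn]; positivity
  set X := (x : ℕ) % t with hX
  -- value of x
  have hq : (x : ℕ) / t = 3 ^ (s + 1) - 1 := by
    have h1 : (x : ℕ) / t % 3 ^ (s + 1) = 3 ^ (s + 1) - 1 :=
      alltwo s _ (fun i hi => hdig i hi)
    have h2 : (x : ℕ) / t < 3 ^ (s + 1) := by
      rw [Nat.div_lt_iff_lt_mul ht0]
      calc (x : ℕ) < 3 * n := x.isLt
        _ = 3 ^ (s + 1) * t := hn3
    rwa [Nat.mod_eq_of_lt h2] at h1
  have hxval : (x : ℕ) + t = 3 ^ (s + 1) * t + X := by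
    have hdm := Nat.div_add_mod (x : ℕ) t
    rw [hq] at hdm
    have hM : 1 ≤ 3 ^ (s + 1) := by omega
    obtain ⟨m, hm⟩ : ∃ m, 3 ^ (s + 1) = m + 1 := ⟨3 ^ (s + 1) - 1, by omega⟩
    rw [hm] at hdm ⊢
    simp only [Nat.add_sub_cancel] at hdm
    rw [← hX] at hdm
    linarith [hdm]
  have hx1 : (x : ℕ) + 1 < 3 * n := by omega
  have hx2 : (x : ℕ) + 1 < 3 ^ (s + 1) * t := by rw [← hn3]; exact hx1
  have hXt : X + 2 ≤ t := by linarith [hx2, hxval]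
  -- the key induction
  have key : ∀ j, j ≤ s + 1 →
      ((stdShuffle 3 n ^ j) x : ℕ) + 3 ^ j * t + 1 = 3 ^ (s + 1) * t + 3 ^ j * (X + 1) := by
    intro j
    induction j with
    | zero =>
      intro _
      simp only [pow_zero, one_mul, pow_zero]
      simp only [pow_zero, Equiv.Perm.coe_one, id_eq]
      linarith [hxval]
    | succ j ih =>
      intro hj
      have hjs : j ≤ s := by omega
      have hv := ih (by omega)
      set v : ℕ := ((stdShuffle 3 n ^ j) x : ℕ) with hvdef
      have hAB : 3 ^ j * t ≤ n := by
        rw [hn]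
        exact Nat.mul_le_mul_right _ (Nat.pow_le_pow_right (by norm_num) hjs)
      have h1A : 1 ≤ 3 ^ j * (X + 1) := Nat.one_le_iff_ne_zero.mpr (by positivity)
      have hvlow : 2 * n ≤ v := by
        have h3n : 3 ^ (s + 1) * t = 3 * n := hn3.symm
        linarith [hv, hAB, h1A]
      have hvhi : v < 3 * n := ((stdShuffle 3 n ^ j) x).isLt
      have hdiv : v / n = 2 := Nat.div_eq_of_lt_le (by linarith) (by linarith)
      have hdm := Nat.div_add_mod v n
      rw [hdiv] at hdm
      have happ : ((stdShuffle 3 n ^ (j + 1)) x : ℕ) = 3 * (v % n) + v / n := by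
        rw [pow_succ', Equiv.Perm.mul_apply, stdShuffle_apply_val]
      rw [happ, hdiv, pow_succ]
      have h3n : 3 ^ (s + 1) * t = 3 * n := hn3.symm
      linarith [hv, hdm, h3n]
  have hk := key (s + 1) le_rfl
  have h1 : ((stdShuffle 3 n ^ (s + 1)) x : ℕ) + 1 = 3 ^ (s + 1) * (X + 1) := by linarith
  constructor
  · rw [← h1]
    omega
  · obtain ⟨d, hd⟩ : ∃ d, t = X + 2 + d := ⟨t - X - 2, by omega⟩
    rw [hd] at hxval
    have hdd : d ≤ 3 ^ (s + 1) * d := Nat.le_mul_of_pos_left d (by positivity)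
    linarith [h1, hxval, h9, hdd]
end
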